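/- Let a, b, ν ∈ ℝ³ be such that the matrix F = [a b ν] (with columns a, b, ν) is invertible, and let P ∈ ℝ³ˣ³. If the five conditions ⟨P·Anti(ν)ᵀ, a⊗a⟩ = 0, ⟨P·Anti(ν)ᵀ, b⊗b⟩ = 0, ⟨P·Anti(ν)ᵀ, sym(a⊗b)⟩ = 0, ⟨P·Anti(ν)ᵀ, sym(a⊗ν)⟩ = 0 and ⟨P·Anti(ν)ᵀ, sym(b⊗ν)⟩ = 0 hold, then sym(P·Anti(ν)ᵀ) = 0. That is, these five conditions suffice to enforce the vanishing of the H(sym Curl)-trace on a face with normal ν. -/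
import Mathlib


open Matrix

set_option maxHeartbeats 2000000

/-- Symmetric part of a 3×3 matrix: `sym M = (M + Mᵀ)/2`. -/
noncomputable def symM (M : Matrix (Fin 3) (Fin 3) ℝ) : Matrix (Fin 3) (Fin 3) ℝ :=
  (1 / 2 : ℝ) • (M + Mᵀ)

/-- The skew-symmetric matrix `Anti ν` with `Anti ν · w = ν × w`. -/
def AntiM (v : Fin 3 → ℝ) : Matrix (Fin 3) (Fin 3) ℝ :=
  !![0, -v 2, v 1; v 2, 0, -v 0; -v 1, v 0, 0]

/-- Frobenius inner product `⟨A,B⟩ = ∑ᵢⱼ Aᵢⱼ Bᵢⱼ`. -/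
def finner (A B : Matrix (Fin 3) (Fin 3) ℝ) : ℝ := ∑ i, ∑ j, A i j * B i j

/-- Outer (dyadic) product `a ⊗ b`. -/
def outer (a b : Fin 3 → ℝ) : Matrix (Fin 3) (Fin 3) ℝ := Matrix.of fun i j => a i * b j

/-- If `F = [a b ν]` is invertible, then the five trace conditions on the face with
normal `ν` force `sym (P·Anti(ν)ᵀ) = 0`. -/
theorem five_conditions_imply_symCurl_trace_zero (a b ν : Fin 3 → ℝ)
    (P : Matrix (Fin 3) (Fin 3) ℝ)
    (hF : IsUnit (Matrix.of fun i j => ![a, b, ν] j i : Matrix (Fin 3) (Fin 3) ℝ))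
    (h1 : finner (P * (AntiM ν)ᵀ) (outer a a) = 0)
    (h2 : finner (P * (AntiM ν)ᵀ) (outer b b) = 0)
    (h3 : finner (P * (AntiM ν)ᵀ) (symM (outer a b)) = 0)
    (h4 : finner (P * (AntiM ν)ᵀ) (symM (outer a ν)) = 0)
    (h5 : finner (P * (AntiM ν)ᵀ) (symM (outer b ν)) = 0) :
    symM (P * (AntiM ν)ᵀ) = 0 := by
  set F : Matrix (Fin 3) (Fin 3) ℝ := Matrix.of fun i j => ![a, b, ν] j i with hFdef
  set S : Matrix (Fin 3) (Fin 3) ℝ := symM (P * (AntiM ν)ᵀ) with hS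
  simp only [finner, symM, outer, AntiM, Matrix.mul_apply, Fin.sum_univ_three,
    Matrix.transpose_apply, Matrix.smul_apply, Matrix.add_apply, Matrix.of_apply,
    Matrix.cons_val', Matrix.cons_val_zero, Matrix.cons_val_one, Matrix.head_cons,
    Matrix.empty_val', Matrix.cons_val_fin_one, Matrix.head_fin_const,
    Matrix.cons_val_two, Matrix.tail_cons, smul_eq_mul] at h1 h2 h3 h4 h5
  have key : Fᵀ * S * F = 0 := by
    ext i j
    fin_cases i <;> fin_cases j <;>
      simp only [hS, hFdef, symM, AntiM, Matrix.mul_apply, Fin.sum_univ_three,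
        Matrix.transpose_apply, Matrix.smul_apply, Matrix.add_apply, Matrix.of_apply,
        Matrix.cons_val', Matrix.cons_val_zero, Matrix.cons_val_one, Matrix.head_cons,
        Matrix.empty_val', Matrix.cons_val_fin_one, Matrix.head_fin_const,
        Matrix.zero_apply, Fin.isValue, Matrix.cons_val_two, Matrix.tail_cons, smul_eq_mul,
        Fin.mk_zero, Fin.mk_one, Fin.reduceFinMk]
    · linear_combination h1
    · linear_combination h3
    · linear_combination h4
    · linear_combination h3
    · linear_combination h2
    · linear_combination h5
    · linear_combination h4
    · linear_combination h5
    · ring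
  have hdet : IsUnit F.det := (Matrix.isUnit_iff_isUnit_det F).mp hF
  have h1' : F * F⁻¹ = 1 := Matrix.mul_nonsing_inv F hdet
  have h2' : Fᵀ⁻¹ * Fᵀ = 1 := Matrix.nonsing_inv_mul Fᵀ (by simpa using hdet)
  have hs : S = Fᵀ⁻¹ * (Fᵀ * S * F) * F⁻¹ := by
    rw [show Fᵀ * S * F = Fᵀ * (S * F) from Matrix.mul_assoc _ _ _,
      ← Matrix.mul_assoc Fᵀ⁻¹ Fᵀ (S * F), h2', Matrix.one_mul,
      Matrix.mul_assoc S F F⁻¹, h1', Matrix.mul_one]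
  rw [hs, key, Matrix.mul_zero, Matrix.zero_mul]
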